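/- arXiv:1605.03823 — 5 statements merged into one kernel-verified Lean document; each statement's English description precedes it below -/
import Mathlib

section
/- Suppose v1, v2, ω, x, y, α : ℝ → ℝ satisfy the equations d/dt(a1 v1 + fω + m ξ') = ω(a2 v2 + gω + m η') − λ v2 − ζ ω, d/dt(a2 v2 + gω + m η') = −ω(a1 v1 + fω + m ξ') + λ v1 + χ ω, x' = v1 cos α − v2 sin α, y' = v1 sin α + v2 cos α, α' = ω, with f = −mη, g = mξ. Then the quantities p_x = (a1 v1 + fω + m ξ' − χ) cos α − (a2 v2 + gω + m η' − ζ) sin α + λ y and p_y = (a1 v1 + fω + m ξ' − χ) sin α + (a2 v2 + gω + m η' − ζ) cos α − λ x are constant in time (their derivatives vanish). -/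
open Real

theorem linear_momenta_are_first_integrals
    (a1 a2 m lam zeta chi : ℝ)
    (v1 v2 ω x y α ξ η : ℝ → ℝ)
    (hv1 : Differentiable ℝ v1) (hv2 : Differentiable ℝ v2)
    (hω : Differentiable ℝ ω) (hα : Differentiable ℝ α)
    (hx : Differentiable ℝ x) (hy : Differentiable ℝ y)
    (hξ : Differentiable ℝ ξ) (hη : Differentiable ℝ η)
    (hξ' : Differentiable ℝ (deriv ξ)) (hη' : Differentiable ℝ (deriv η))
    (heq1 : ∀ t, deriv (fun s => a1 * v1 s + (-m * η s) * ω s + m * deriv ξ s) t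
      = ω t * (a2 * v2 t + (m * ξ t) * ω t + m * deriv η t) - lam * v2 t - zeta * ω t)
    (heq2 : ∀ t, deriv (fun s => a2 * v2 s + (m * ξ s) * ω s + m * deriv η s) t
      = -(ω t) * (a1 * v1 t + (-m * η t) * ω t + m * deriv ξ t) + lam * v1 t + chi * ω t)
    (hkin1 : ∀ t, deriv x t = v1 t * cos (α t) - v2 t * sin (α t))
    (hkin2 : ∀ t, deriv y t = v1 t * sin (α t) + v2 t * cos (α t))
    (hkin3 : ∀ t, deriv α t = ω t) :
    (∀ t, deriv (fun s =>
        (a1 * v1 s + (-m * η s) * ω s + m * deriv ξ s - chi) * cos (α s)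
        - (a2 * v2 s + (m * ξ s) * ω s + m * deriv η s - zeta) * sin (α s)
        + lam * y s) t = 0) ∧
    (∀ t, deriv (fun s =>
        (a1 * v1 s + (-m * η s) * ω s + m * deriv ξ s - chi) * sin (α s)
        + (a2 * v2 s + (m * ξ s) * ω s + m * deriv η s - zeta) * cos (α s)
        - lam * x s) t = 0) := by
  have hP : Differentiable ℝ (fun s => a1 * v1 s + (-m * η s) * ω s + m * deriv ξ s) := by
    fun_prop
  have hQ : Differentiable ℝ (fun s => a2 * v2 s + (m * ξ s) * ω s + m * deriv η s) := by
    fun_prop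
  constructor <;> intro t
  · have hPt : HasDerivAt (fun s => a1 * v1 s + (-m * η s) * ω s + m * deriv ξ s)
        (deriv (fun s => a1 * v1 s + (-m * η s) * ω s + m * deriv ξ s) t) t :=
      (hP t).hasDerivAt
    have hQt : HasDerivAt (fun s => a2 * v2 s + (m * ξ s) * ω s + m * deriv η s)
        (deriv (fun s => a2 * v2 s + (m * ξ s) * ω s + m * deriv η s) t) t :=
      (hQ t).hasDerivAt
    rw [heq1 t] at hPt
    rw [heq2 t] at hQt
    have hαt : HasDerivAt α (ω t) t := by
      have := (hα t).hasDerivAt; rwa [hkin3 t] at this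
    have hyt : HasDerivAt y (v1 t * sin (α t) + v2 t * cos (α t)) t := by
      have := (hy t).hasDerivAt; rwa [hkin2 t] at this
    have H : HasDerivAt (fun s =>
        (a1 * v1 s + (-m * η s) * ω s + m * deriv ξ s - chi) * cos (α s)
        - (a2 * v2 s + (m * ξ s) * ω s + m * deriv η s - zeta) * sin (α s)
        + lam * y s)
        ((ω t * (a2 * v2 t + (m * ξ t) * ω t + m * deriv η t) - lam * v2 t - zeta * ω t)
            * cos (α t)
          + (a1 * v1 t + (-m * η t) * ω t + m * deriv ξ t - chi) * (-sin (α t) * ω t)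
          - ((-(ω t) * (a1 * v1 t + (-m * η t) * ω t + m * deriv ξ t) + lam * v1 t + chi * ω t)
              * sin (α t)
            + (a2 * v2 t + (m * ξ t) * ω t + m * deriv η t - zeta) * (cos (α t) * ω t))
          + lam * (v1 t * sin (α t) + v2 t * cos (α t))) t :=
      (((hPt.sub_const chi).mul hαt.cos).sub ((hQt.sub_const zeta).mul hαt.sin)).add
        (hyt.const_mul lam)
    rw [H.deriv]; ring
  · have hPt : HasDerivAt (fun s => a1 * v1 s + (-m * η s) * ω s + m * deriv ξ s)
        (deriv (fun s => a1 * v1 s + (-m * η s) * ω s + m * deriv ξ s) t) t :=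
      (hP t).hasDerivAt
    have hQt : HasDerivAt (fun s => a2 * v2 s + (m * ξ s) * ω s + m * deriv η s)
        (deriv (fun s => a2 * v2 s + (m * ξ s) * ω s + m * deriv η s) t) t :=
      (hQ t).hasDerivAt
    rw [heq1 t] at hPt
    rw [heq2 t] at hQt
    have hαt : HasDerivAt α (ω t) t := by
      have := (hα t).hasDerivAt; rwa [hkin3 t] at this
    have hxt : HasDerivAt x (v1 t * cos (α t) - v2 t * sin (α t)) t := by
      have := (hx t).hasDerivAt; rwa [hkin1 t] at this
    have H : HasDerivAt (fun s =>
        (a1 * v1 s + (-m * η s) * ω s + m * deriv ξ s - chi) * sin (α s)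
        + (a2 * v2 s + (m * ξ s) * ω s + m * deriv η s - zeta) * cos (α s)
        - lam * x s)
        ((ω t * (a2 * v2 t + (m * ξ t) * ω t + m * deriv η t) - lam * v2 t - zeta * ω t)
            * sin (α t)
          + (a1 * v1 t + (-m * η t) * ω t + m * deriv ξ t - chi) * (cos (α t) * ω t)
          + ((-(ω t) * (a1 * v1 t + (-m * η t) * ω t + m * deriv ξ t) + lam * v1 t + chi * ω t)
              * cos (α t)
            + (a2 * v2 t + (m * ξ t) * ω t + m * deriv η t - zeta) * (-sin (α t) * ω t))
          - lam * (v1 t * cos (α t) - v2 t * sin (α t))) t :=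
      (((hPt.sub_const chi).mul hαt.sin).add ((hQt.sub_const zeta).mul hαt.cos)).sub
        (hxt.const_mul lam)
    rw [H.deriv]; ring
end

section
/- Under the same equations of motion, together with the third equation d/dt(f v1 + g v2 + b ω + m(ξ η' − η ξ') + I_r Ω) = v2(a1 v1 + fω + m ξ') − v1(a2 v2 + gω + m η') + ζ v1 − χ v2, the angular momentum integral K = f v1 + g v2 + b ω + m(ξ η' − η ξ') + I_r Ω + (λ/2)(x² + y²) + x p_y − y p_x is constant in time, where p_x, p_y are the (constant) linear momentum integrals. -/
open Real

theorem angular_momentum_is_first_integral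
    (a1 a2 m lam zeta chi Ir px py : ℝ)
    (v1 v2 ω x y α ξ η b Ω : ℝ → ℝ)
    (hv1 : Differentiable ℝ v1) (hv2 : Differentiable ℝ v2)
    (hω : Differentiable ℝ ω) (hα : Differentiable ℝ α)
    (hx : Differentiable ℝ x) (hy : Differentiable ℝ y)
    (hξ : Differentiable ℝ ξ) (hη : Differentiable ℝ η)
    (hb : Differentiable ℝ b) (hΩ : Differentiable ℝ Ω)
    (hξ' : Differentiable ℝ (deriv ξ)) (hη' : Differentiable ℝ (deriv η))
    (heq3 : ∀ t, deriv (fun s =>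
        (-m * η s) * v1 s + (m * ξ s) * v2 s + b s * ω s
        + m * (ξ s * deriv η s - η s * deriv ξ s) + Ir * Ω s) t
      = v2 t * (a1 * v1 t + (-m * η t) * ω t + m * deriv ξ t)
        - v1 t * (a2 * v2 t + (m * ξ t) * ω t + m * deriv η t)
        + zeta * v1 t - chi * v2 t)
    (hkin1 : ∀ t, deriv x t = v1 t * cos (α t) - v2 t * sin (α t))
    (hkin2 : ∀ t, deriv y t = v1 t * sin (α t) + v2 t * cos (α t))
    (hkin3 : ∀ t, deriv α t = ω t)
    (hpx : ∀ t, px =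
        (a1 * v1 t + (-m * η t) * ω t + m * deriv ξ t - chi) * cos (α t)
        - (a2 * v2 t + (m * ξ t) * ω t + m * deriv η t - zeta) * sin (α t)
        + lam * y t)
    (hpy : ∀ t, py =
        (a1 * v1 t + (-m * η t) * ω t + m * deriv ξ t - chi) * sin (α t)
        + (a2 * v2 t + (m * ξ t) * ω t + m * deriv η t - zeta) * cos (α t)
        - lam * x t) :
    ∀ t, deriv (fun s =>
        (-m * η s) * v1 s + (m * ξ s) * v2 s + b s * ω s
        + m * (ξ s * deriv η s - η s * deriv ξ s) + Ir * Ω s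
        + (lam / 2) * (x s ^ 2 + y s ^ 2) + x s * py - y s * px) t = 0 := by
  intro t
  have hK1 : Differentiable ℝ (fun s =>
      (-m * η s) * v1 s + (m * ξ s) * v2 s + b s * ω s
      + m * (ξ s * deriv η s - η s * deriv ξ s) + Ir * Ω s) := by
    fun_prop
  have hx' := (hx t).hasDerivAt
  have hy' := (hy t).hasDerivAt
  have H : HasDerivAt (fun s =>
      (-m * η s) * v1 s + (m * ξ s) * v2 s + b s * ω s
      + m * (ξ s * deriv η s - η s * deriv ξ s) + Ir * Ω s
      + (lam / 2) * (x s ^ 2 + y s ^ 2) + x s * py - y s * px)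
      (deriv (fun s =>
        (-m * η s) * v1 s + (m * ξ s) * v2 s + b s * ω s
        + m * (ξ s * deriv η s - η s * deriv ξ s) + Ir * Ω s) t
       + (lam/2) * ((2:ℕ) * x t ^ (2-1) * deriv x t + (2:ℕ) * y t ^ (2-1) * deriv y t)
       + deriv x t * py - deriv y t * px) t :=
    ((((hK1 t).hasDerivAt.add (((hx'.pow 2).add (hy'.pow 2)).const_mul (lam/2))).add
      (hx'.mul_const py)).sub (hy'.mul_const px))
  have hgoal := H.deriv
  rw [hgoal, heq3 t, hkin1 t, hkin2 t, hpx t, hpy t]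
  have hsc := sin_sq_add_cos_sq (α t)
  push_cast
  linear_combination (-(v2 t * (a1 * v1 t + -m * η t * ω t + m * deriv ξ t - chi)
    - v1 t * (a2 * v2 t + m * ξ t * ω t + m * deriv η t - zeta))) * hsc
end

section
/- Every solution ψ of the ODE m ρ̄ ψ' = r cos ψ + σ √(1 − (r²/σ²) sin² ψ) with 0 < r < σ satisfies the implicit relation E(ψ(t), r/σ) − E(ψ₀, r/σ) − (r/σ)(sin ψ(t) − sin ψ₀) = ((σ² − r²)/(m ρ̄ σ)) t, where E(φ, k) = ∫₀^φ √(1 − k² sin² u) du is the incomplete elliptic integral of the second kind. -/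
/-! With k = r / σ and S = √(1 - k² sin² ψ), the right-hand side of the ODE is
σ (S + k cos ψ) / (m ρ̄), while d/dψ (E(ψ, k) - k sin ψ) = S - k cos ψ. By the chain rule the
derivative of t ↦ E(ψ t, k) - k sin (ψ t) is therefore σ (S² - k² cos² ψ) / (m ρ̄)
= σ (1 - k²) / (m ρ̄), a constant, and integrating gives the relation. -/

open Real

/-- Incomplete elliptic integral of the second kind. -/
noncomputable def ellipticE (φ k : ℝ) : ℝ :=
  ∫ u in (0 : ℝ)..φ, Real.sqrt (1 - k ^ 2 * sin u ^ 2)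

theorem hasDerivAt_ellipticE (φ k : ℝ) :
    HasDerivAt (fun φ => ellipticE φ k) (√(1 - k ^ 2 * sin φ ^ 2)) φ := by
  have hcont : Continuous fun u => √(1 - k ^ 2 * sin u ^ 2) := by fun_prop
  exact intervalIntegral.integral_hasDerivAt_right (hcont.intervalIntegrable _ _)
    hcont.stronglyMeasurable.stronglyMeasurableAtFilter hcont.continuousAt

theorem HasDerivAt.ellipticE_sub_mul_sin {ψ : ℝ → ℝ} {ψ' t : ℝ} (k : ℝ)
    (hψ : HasDerivAt ψ ψ' t) :
    HasDerivAt (fun t => ellipticE (ψ t) k - k * Real.sin (ψ t))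
      ((√(1 - k ^ 2 * Real.sin (ψ t) ^ 2) - k * Real.cos (ψ t)) * ψ') t :=
  (((hasDerivAt_ellipticE (ψ t) k).comp t hψ).sub (hψ.sin.const_mul k)).congr_deriv
    (by ring)

theorem sqrt_one_sub_sq_mul_sin_sq_sub_mul_cos_mul_add {k : ℝ} (hk : k ^ 2 ≤ 1) (x : ℝ) :
    (√(1 - k ^ 2 * sin x ^ 2) - k * cos x) * (√(1 - k ^ 2 * sin x ^ 2) + k * cos x)
      = 1 - k ^ 2 := by
  have hnonneg : 0 ≤ 1 - k ^ 2 * sin x ^ 2 := by nlinarith [sin_sq_le_one x]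
  linear_combination sq_sqrt hnonneg - k ^ 2 * sin_sq_add_cos_sq x

theorem sub_eq_mul_of_forall_hasDerivAt {f : ℝ → ℝ} {c : ℝ} (hf : ∀ t, HasDerivAt f c t)
    (t : ℝ) : f t - f 0 = c * t := by
  rw [← intervalIntegral.integral_eq_sub_of_hasDerivAt (fun x _ => hf x) intervalIntegrable_const,
    intervalIntegral.integral_const, smul_eq_mul, sub_zero, mul_comm]

theorem elliptic_implicit_relation_general
    (r σ m ρbar ψ₀ : ℝ) (hr : 0 < r) (hrσ : r < σ)
    (ψ : ℝ → ℝ) (hψ0 : ψ 0 = ψ₀)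
    (hode : ∀ t, HasDerivAt ψ
      ((r * cos (ψ t) + σ * Real.sqrt (1 - (r ^ 2 / σ ^ 2) * sin (ψ t) ^ 2))
        / (m * ρbar)) t) :
    ∀ t, ellipticE (ψ t) (r / σ) - ellipticE ψ₀ (r / σ)
        - (r / σ) * (sin (ψ t) - sin ψ₀)
      = ((σ ^ 2 - r ^ 2) / (m * ρbar * σ)) * t := by
  have hσ : σ ≠ 0 := (hr.trans hrσ).ne'
  have hk : (r / σ) ^ 2 ≤ 1 := by
    rw [div_pow, div_le_one (by positivity)]
    nlinarith
  have hderiv : ∀ t, HasDerivAt (fun t => ellipticE (ψ t) (r / σ) - r / σ * sin (ψ t))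
      ((σ ^ 2 - r ^ 2) / (m * ρbar * σ)) t := by
    intro t
    refine ((hode t).ellipticE_sub_mul_sin (r / σ)).congr_deriv ?_
    rw [← div_pow, mul_div_assoc', mul_comm (m * ρbar) σ, ← div_div (σ ^ 2 - r ^ 2)]
    refine congrArg (· / (m * ρbar)) ?_
    have hconj := sqrt_one_sub_sq_mul_sin_sq_sub_mul_cos_mul_add hk (ψ t)
    generalize √(1 - (r / σ) ^ 2 * sin (ψ t) ^ 2) = S at hconj ⊢
    field_simp at hconj ⊢
    linear_combination hconj
  intro t
  have := sub_eq_mul_of_forall_hasDerivAt hderiv t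
  rw [hψ0] at this
  linarith

theorem elliptic_implicit_relation
    (r σ m ρbar ψ₀ : ℝ) (hr : 0 < r) (hrσ : r < σ)
    (hm : 0 < m) (hρ : 0 < ρbar)
    (ψ : ℝ → ℝ) (hψ0 : ψ 0 = ψ₀)
    (hode : ∀ t, HasDerivAt ψ
      ((r * cos (ψ t) + σ * Real.sqrt (1 - (r ^ 2 / σ ^ 2) * sin (ψ t) ^ 2))
        / (m * ρbar)) t) :
    ∀ t, ellipticE (ψ t) (r / σ) - ellipticE ψ₀ (r / σ)
        - (r / σ) * (sin (ψ t) - sin ψ₀)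
      = ((σ ^ 2 - r ^ 2) / (m * ρbar * σ)) * t :=
  elliptic_implicit_relation_general r σ m ρbar ψ₀ hr hrσ ψ hψ0 hode
end

section
/- For φ₀ = 0 or φ₀ = π, the quantity G = ρ (r cos ψ ± σ) (with + for φ₀ = 0, − for φ₀ = π) is a first integral of the system m ρ ψ' = r cos ψ ± σ, m ρ' = r sin ψ, and along solutions with G ≠ 0 the angle satisfies the reduced equation ψ' = (1/(mG)) (r cos ψ ± σ)². -/
/-!
Along a solution, `d/dt (ρ (r cos ψ + a)) = ρ' (r cos ψ + a) - ρ r sin ψ ψ'`, and the two terms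
cancel because `m ρ ψ' = r cos ψ + a` and `m ρ' = r sin ψ`. Hence `G = ρ (r cos ψ + a)` is
constant; substituting `ρ = G / (r cos ψ + a)` into the equation for `ψ` gives the reduced equation.
-/

open Real

theorem hasDerivAt_mul_cos_add_eq_zero {r m a : ℝ} {ρ ψ : ℝ → ℝ} {t : ℝ} (hρt : ρ t ≠ 0)
    (hψ : HasDerivAt ψ ((r * cos (ψ t) + a) / (m * ρ t)) t)
    (hρ : HasDerivAt ρ (r * sin (ψ t) / m) t) :
    HasDerivAt (fun s => ρ s * (r * cos (ψ s) + a)) 0 t := by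
  have hc : HasDerivAt (fun s => r * cos (ψ s) + a)
      (r * (-sin (ψ t) * ((r * cos (ψ t) + a) / (m * ρ t)))) t :=
    ((hψ.cos).const_mul r).add_const a
  have hcancel : ρ t * ((r * cos (ψ t) + a) / (m * ρ t)) = (r * cos (ψ t) + a) / m := by
    rw [← div_div, mul_div_cancel₀ _ hρt]
  refine (hρ.mul hc).congr_deriv ?_
  linear_combination (-r * sin (ψ t)) * hcancel

theorem mul_cos_add_eq_of_hasDerivAt {r m a : ℝ} {ρ ψ : ℝ → ℝ} (hρ0 : ∀ t, ρ t ≠ 0)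
    (hψ : ∀ t, HasDerivAt ψ ((r * cos (ψ t) + a) / (m * ρ t)) t)
    (hρ : ∀ t, HasDerivAt ρ (r * sin (ψ t) / m) t) (t s : ℝ) :
    ρ t * (r * cos (ψ t) + a) = ρ s * (r * cos (ψ s) + a) :=
  have hF t := hasDerivAt_mul_cos_add_eq_zero (hρ0 t) (hψ t) (hρ t)
  is_const_of_deriv_eq_zero (fun t => (hF t).differentiableAt) (fun t => (hF t).deriv) t s

theorem div_mul_eq_sq_div_mul_of_mul_eq {m ρ c G : ℝ} (hG : ρ * c = G) (hG0 : G ≠ 0) :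
    c / (m * ρ) = c ^ 2 / (m * G) := by
  subst hG
  rw [sq, ← mul_assoc, mul_div_mul_right _ _ (right_ne_zero_of_mul hG0)]

theorem sin_phi0_zero_first_integral_and_reduced_equation_general
    (r σ m ε : ℝ)
    (ρ ψ : ℝ → ℝ) (hρpos : ∀ t, 0 < ρ t)
    (hψ : ∀ t, HasDerivAt ψ ((r * cos (ψ t) + ε * σ) / (m * ρ t)) t)
    (hρ : ∀ t, HasDerivAt ρ ((r * sin (ψ t)) / m) t)
    (G : ℝ) (hG : G = ρ 0 * (r * cos (ψ 0) + ε * σ)) :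
    (∀ t, ρ t * (r * cos (ψ t) + ε * σ) = G) ∧
    (G ≠ 0 → ∀ t, HasDerivAt ψ ((r * cos (ψ t) + ε * σ) ^ 2 / (m * G)) t) := by
  have hconst : ∀ t, ρ t * (r * cos (ψ t) + ε * σ) = G := fun t =>
    hG ▸ mul_cos_add_eq_of_hasDerivAt (fun t => (hρpos t).ne') hψ hρ t 0
  refine ⟨hconst, fun hG0 t => ?_⟩
  rw [← div_mul_eq_sq_div_mul_of_mul_eq (hconst t) hG0]
  exact hψ t

theorem sin_phi0_zero_first_integral_and_reduced_equation
    (r σ m ε : ℝ) (hr : 0 < r) (hσ : 0 < σ) (hm : 0 < m)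
    (hε : ε = 1 ∨ ε = -1)
    (ρ ψ : ℝ → ℝ) (hρpos : ∀ t, 0 < ρ t)
    (hψ : ∀ t, HasDerivAt ψ ((r * cos (ψ t) + ε * σ) / (m * ρ t)) t)
    (hρ : ∀ t, HasDerivAt ρ ((r * sin (ψ t)) / m) t)
    (G : ℝ) (hG : G = ρ 0 * (r * cos (ψ 0) + ε * σ)) :
    (∀ t, ρ t * (r * cos (ψ t) + ε * σ) = G) ∧
    (G ≠ 0 → ∀ t, HasDerivAt ψ ((r * cos (ψ t) + ε * σ) ^ 2 / (m * G)) t) :=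
  sin_phi0_zero_first_integral_and_reduced_equation_general r σ m ε ρ ψ hρpos hψ hρ G hG
end

section
/- Under the first integral G = ρ(cos ψ + κ) exp(−(2κ tan φ₀/√(κ² − 1))(arctan((√(κ²−1)/(κ+1)) tan(ψ/2)) + ⌊(ψ+π)/(2π)⌋π)), if ψ increases by 2π (one full period) along a solution, then ρ is multiplied by the factor exp(2π κ tan φ₀/√(κ² − 1)); in particular the increment over one period is Δρ = ρ₀(exp(2π κ tan φ₀/√(κ² − 1)) − 1), and over N periods Δρ_N = ρ₀(exp(2Nπ κ tan φ₀/√(κ² − 1)) − 1), whose sign equals the sign of tan φ₀ when κ > 1. -/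
open Real

/-- The ψ-dependent factor of the first integral `G = ρ · h ψ` in the case `κ > 1`. -/
noncomputable def intFactor (κ φ₀ ψ : ℝ) : ℝ :=
  (cos ψ + κ) * Real.exp (-(2 * κ * tan φ₀ / Real.sqrt (κ ^ 2 - 1))
    * (Real.arctan ((Real.sqrt (κ ^ 2 - 1) / (κ + 1)) * tan (ψ / 2))
       + (⌊(ψ + π) / (2 * π)⌋ : ℝ) * π))

lemma intFactor_pos (κ φ₀ ψ : ℝ) (hκ : 1 < κ) : 0 < intFactor κ φ₀ ψ := by
  unfold intFactor
  have : (0:ℝ) < cos ψ + κ := by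
    have := Real.neg_one_le_cos ψ
    linarith
  positivity

lemma intFactor_period (κ φ₀ ψ : ℝ) :
    intFactor κ φ₀ (ψ + 2 * π) =
      Real.exp (-(2 * κ * tan φ₀ / Real.sqrt (κ ^ 2 - 1) * π)) * intFactor κ φ₀ ψ := by
  unfold intFactor
  have h1 : cos (ψ + 2 * π) = cos ψ := by
    simpa using Real.cos_add_two_pi ψ
  have h2 : tan ((ψ + 2 * π) / 2) = tan (ψ / 2) := by
    have h : (ψ + 2 * π) / 2 = ψ / 2 + π := by ring
    rw [h, Real.tan_add_pi]
  have h3 : (⌊(ψ + 2 * π + π) / (2 * π)⌋ : ℤ) = ⌊(ψ + π) / (2 * π)⌋ + 1 := by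
    have hpi : (2 * π) ≠ 0 := by positivity
    have h : (ψ + 2 * π + π) / (2 * π) = (ψ + π) / (2 * π) + 1 := by
      field_simp; ring
    rw [h, Int.floor_add_one]
  rw [h1, h2, h3]
  push_cast
  set c := 2 * κ * tan φ₀ / Real.sqrt (κ ^ 2 - 1) with hc
  set A := Real.arctan (Real.sqrt (κ ^ 2 - 1) / (κ + 1) * tan (ψ / 2)) with hA
  set n := ((⌊(ψ + π) / (2 * π)⌋ : ℤ) : ℝ) with hn
  rw [show -c * (A + (n + 1) * π) = -(c * π) + -c * (A + n * π) by ring, Real.exp_add]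
  ring

lemma intFactor_period_nat (κ φ₀ ψ : ℝ) (N : ℕ) :
    intFactor κ φ₀ (ψ + 2 * π * N) =
      Real.exp (-(2 * κ * tan φ₀ / Real.sqrt (κ ^ 2 - 1) * π * N)) * intFactor κ φ₀ ψ := by
  induction N with
  | zero => simp
  | succ n ih =>
    have h : ψ + 2 * π * (n + 1 : ℕ) = (ψ + 2 * π * n) + 2 * π := by push_cast; ring
    rw [h, intFactor_period, ih, ← mul_assoc, ← Real.exp_add]
    push_cast
    ring_nf

lemma cancel_exp (a b ρ₀ ρ₁ : ℝ) (hab : a + b = 0)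
    (h1 : ρ₁ * Real.exp a = ρ₀) : ρ₁ = ρ₀ * Real.exp b := by
  have e : Real.exp a * Real.exp b = 1 := by
    rw [← Real.exp_add, hab, Real.exp_zero]
  calc ρ₁ = ρ₁ * (Real.exp a * Real.exp b) := by rw [e, mul_one]
    _ = (ρ₁ * Real.exp a) * Real.exp b := by ring
    _ = ρ₀ * Real.exp b := by rw [h1]

theorem rho_growth_per_period
    (κ φ₀ : ℝ) (hκ : 1 < κ) (htan : tan φ₀ ≠ 0) :
    (∀ ρ₀ ρ₁ ψ₀ : ℝ, 0 < ρ₀ →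
      ρ₁ * intFactor κ φ₀ (ψ₀ + 2 * π) = ρ₀ * intFactor κ φ₀ ψ₀ →
      ρ₁ = ρ₀ * Real.exp (2 * π * κ * tan φ₀ / Real.sqrt (κ ^ 2 - 1)) ∧
      ρ₁ - ρ₀ = ρ₀ * (Real.exp (2 * π * κ * tan φ₀ / Real.sqrt (κ ^ 2 - 1)) - 1)) ∧
    (∀ (N : ℕ) (ρ₀ ρN ψ₀ : ℝ), 1 ≤ N → 0 < ρ₀ →
      ρN * intFactor κ φ₀ (ψ₀ + 2 * π * N) = ρ₀ * intFactor κ φ₀ ψ₀ →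
      ρN - ρ₀ = ρ₀ * (Real.exp (2 * N * π * κ * tan φ₀ / Real.sqrt (κ ^ 2 - 1)) - 1) ∧
      Real.sign (ρN - ρ₀) = Real.sign (tan φ₀)) := by
  have hs : 0 < Real.sqrt (κ ^ 2 - 1) := by
    apply Real.sqrt_pos.mpr; nlinarith
  constructor
  · intro ρ₀ ρ₁ ψ₀ hρ₀ heq
    rw [intFactor_period, ← mul_assoc, mul_comm ρ₁ (Real.exp _), mul_comm ρ₀ _, mul_comm _ (intFactor κ φ₀ ψ₀)] at heq
    have hne : intFactor κ φ₀ ψ₀ ≠ 0 := (intFactor_pos κ φ₀ ψ₀ hκ).ne'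
    have h1 : ρ₁ * Real.exp (-(2 * κ * tan φ₀ / Real.sqrt (κ ^ 2 - 1) * π)) = ρ₀ := by
      have := mul_left_cancel₀ hne heq
      linarith [this]
    have h2 : ρ₁ = ρ₀ * Real.exp (2 * π * κ * tan φ₀ / Real.sqrt (κ ^ 2 - 1)) := by
      apply cancel_exp _ _ _ _ _ h1
      field_simp
      ring
    exact ⟨h2, by rw [h2]; ring⟩
  · intro N ρ₀ ρN ψ₀ hN hρ₀ heq
    rw [intFactor_period_nat, ← mul_assoc, mul_comm ρN (Real.exp _), mul_comm ρ₀ _, mul_comm _ (intFactor κ φ₀ ψ₀)] at heq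
    have hne : intFactor κ φ₀ ψ₀ ≠ 0 := (intFactor_pos κ φ₀ ψ₀ hκ).ne'
    have h1 : ρN * Real.exp (-(2 * κ * tan φ₀ / Real.sqrt (κ ^ 2 - 1) * π * N)) = ρ₀ := by
      have := mul_left_cancel₀ hne heq
      linarith [this]
    have h2 : ρN = ρ₀ * Real.exp (2 * N * π * κ * tan φ₀ / Real.sqrt (κ ^ 2 - 1)) := by
      apply cancel_exp _ _ _ _ _ h1
      field_simp
      ring
    have hmain : ρN - ρ₀ = ρ₀ * (Real.exp (2 * N * π * κ * tan φ₀ / Real.sqrt (κ ^ 2 - 1)) - 1) := by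
      rw [h2]; ring
    refine ⟨hmain, ?_⟩
    set x := 2 * (N:ℝ) * π * κ * tan φ₀ / Real.sqrt (κ ^ 2 - 1) with hx
    have hN' : (0:ℝ) < N := by exact_mod_cast Nat.lt_of_lt_of_le Nat.zero_lt_one hN
    have hπ := Real.pi_pos
    have hκ0 : (0:ℝ) < κ := by linarith
    have hc : 0 < 2 * (N:ℝ) * π * κ / Real.sqrt (κ ^ 2 - 1) := by
      apply div_pos _ hs; positivity
    have hxc : x = (2 * (N:ℝ) * π * κ / Real.sqrt (κ ^ 2 - 1)) * tan φ₀ := by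
      rw [hx]; ring
    rw [hmain]
    rcases lt_or_gt_of_ne htan with ht | ht
    · have hxneg : x < 0 := by rw [hxc]; exact mul_neg_of_pos_of_neg hc ht
      have : Real.exp x < 1 := Real.exp_lt_one_iff.mpr hxneg
      have hlt : ρ₀ * (Real.exp x - 1) < 0 := mul_neg_of_pos_of_neg hρ₀ (by linarith)
      rw [Real.sign_of_neg hlt, Real.sign_of_neg ht]
    · have hxpos : 0 < x := by rw [hxc]; exact mul_pos hc ht
      have : 1 < Real.exp x := by linarith [Real.add_one_le_exp x]
      have hgt : 0 < ρ₀ * (Real.exp x - 1) := mul_pos hρ₀ (by linarith)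
      rw [Real.sign_of_pos hgt, Real.sign_of_pos ht]
end
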